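/- arXiv:cs/0604024 — 3 statements merged into one kernel-verified Lean document; each statement's English description precedes it below -/
import Mathlib

section
/- Suppose 0 → K → A →^β B → 0 is a short exact sequence in 𝒜, and suppose there exist an object H and a morphism γ : A → H such that the sequence 0 → A →^{(β,γ)} B ⊕ H → C → 0 is exact, where the B-component of the first map is β. Then cc(F, K) ≤ cc(F, A) + cc(F, C). (This is the core inequality in the proof of the paper's Theorem 1, with K, A, B, C playing the roles of G_{U∩Z̄}, G_U, G_{U∩Z}, G_Z, and H a virtual zero extension G_{U,Z}.) -/
/-!
The two short exact sequences combine into a third one, `0 → K → H → C → 0`, whose first map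
`ι ≫ γ` factors through `A`. In its long exact `Ext(F, -)` sequence the kernel of
`Ext^{n+1}(F, K) → Ext^{n+1}(F, H)` is the image of `Ext^n(F, C)`, and it contains the kernel of
`Ext^{n+1}(F, ι)`; hence `dim Ext^{n+1}(F, K) ≤ dim Ext^{n+1}(F, A) + dim Ext^n(F, C)`, while
`Ext^0(F, K) → Ext^0(F, A)` is injective. Summing over `n` gives the inequality.
The long exact sequence is that of cohomology of `Hom(P, -)` for a projective resolution `P` of
`F`, which turns short exact sequences into short exact sequences of complexes.
-/

open CategoryTheory Opposite Limits

/-- The cohomological complexity `cc(F, X) = ∑_{i ≥ 0} dim_𝕜 Ext^i(F, X)` (a finite sum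
under the standing assumptions that the Ext groups are finite-dimensional and vanish for
all sufficiently large `i`). -/
noncomputable def cc (𝕜 : Type*) [Field 𝕜] {𝒜 : Type*} [Category 𝒜] [Abelian 𝒜]
    [Linear 𝕜 𝒜] [EnoughProjectives 𝒜] (F X : 𝒜) : ℕ :=
  ∑ᶠ i : ℕ, Module.finrank 𝕜 (((Ext 𝕜 𝒜 i).obj (op F)).obj X)

lemma finsum_eq_sum_range_of_forall_ge {M : Type*} [AddCommMonoid M] {f : ℕ → M} {N : ℕ}
    (hf : ∀ n ≥ N, f n = 0) : ∑ᶠ n, f n = ∑ n ∈ Finset.range N, f n :=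
  finsum_eq_finsetSum_of_support_subset f fun n hn => by
    by_contra h
    exact hn (hf n (by simpa using h))

theorem finsum_le_finsum_add_finsum_of_le_add_pred {k a c : ℕ → ℕ}
    (ha : (Function.support a).Finite) (hc : (Function.support c).Finite)
    (h₀ : k 0 ≤ a 0) (hsucc : ∀ n, k (n + 1) ≤ a (n + 1) + c n) :
    ∑ᶠ n, k n ≤ ∑ᶠ n, a n + ∑ᶠ n, c n := by
  obtain ⟨M, hM⟩ := (ha.union hc).bddAbove
  have ha' : ∀ n ≥ M + 1, a n = 0 := fun n hn => by
    by_contra h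
    linarith [hM (Or.inl h)]
  have hc' : ∀ n ≥ M + 1, c n = 0 := fun n hn => by
    by_contra h
    linarith [hM (Or.inr h)]
  have hk : ∀ n ≥ M + 2, k n = 0 := fun n hn => by
    obtain ⟨m, rfl⟩ : ∃ m, n = m + 1 := ⟨n - 1, by omega⟩
    simpa [ha' (m + 1) (by omega), hc' m (by omega)] using hsucc m
  rw [finsum_eq_sum_range_of_forall_ge hk,
    finsum_eq_sum_range_of_forall_ge (N := M + 2) fun n hn => ha' n (by omega),
    finsum_eq_sum_range_of_forall_ge hc', Finset.sum_range_succ' k, Finset.sum_range_succ' a]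
  calc ∑ n ∈ Finset.range (M + 1), k (n + 1) + k 0
      ≤ ∑ n ∈ Finset.range (M + 1), (a (n + 1) + c n) + a 0 :=
        add_le_add (Finset.sum_le_sum fun n _ => hsucc n) h₀
    _ = _ := by rw [Finset.sum_add_distrib]; ring

lemma Module.finite_support_finrank_of_eventually_subsingleton {R : Type*} [Semiring R]
    [Nontrivial R] {M : ℕ → Type*} [∀ n, AddCommMonoid (M n)] [∀ n, Module R (M n)]
    (h : ∃ N, ∀ n ≥ N, Subsingleton (M n)) :
    (Function.support fun n => Module.finrank R (M n)).Finite := by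
  obtain ⟨N, hN⟩ := h
  refine (Set.finite_lt_nat N).subset fun n hn => ?_
  by_contra hlt
  have := hN n (not_lt.1 hlt)
  exact hn Module.finrank_zero_of_subsingleton

lemma Module.finrank_le_finrank_add_finrank_of_ker_le_range {𝕜 W M V : Type*} [DivisionRing 𝕜]
    [AddCommGroup W] [Module 𝕜 W] [AddCommGroup M] [Module 𝕜 M] [AddCommGroup V] [Module 𝕜 V]
    [FiniteDimensional 𝕜 W] [FiniteDimensional 𝕜 V] (f : W →ₗ[𝕜] M) (u : M →ₗ[𝕜] V)
    (h : LinearMap.ker u ≤ LinearMap.range f) :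
    Module.finrank 𝕜 M ≤ Module.finrank 𝕜 W + Module.finrank 𝕜 V := by
  by_cases hM : FiniteDimensional 𝕜 M
  · calc Module.finrank 𝕜 M
        = Module.finrank 𝕜 (LinearMap.ker u) + Module.finrank 𝕜 (LinearMap.range u) := by
          rw [add_comm, u.finrank_range_add_finrank_ker]
      _ ≤ Module.finrank 𝕜 (LinearMap.range f) + Module.finrank 𝕜 V :=
          add_le_add (Submodule.finrank_mono h) (Submodule.finrank_le _)
      _ ≤ Module.finrank 𝕜 W + Module.finrank 𝕜 V := by grw [LinearMap.finrank_range_le]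
  · simp [Module.finrank_of_not_finite hM]

section ShortExact

variable {𝒜 : Type*} [Category 𝒜] [Abelian 𝒜] {K A B C H : 𝒜}
  {ι : K ⟶ A} {β : A ⟶ B} {γ : A ⟶ H} {δ : B ⊞ H ⟶ C}

lemma comp_biprod_lift_eq (w₁ : ι ≫ β = 0) :
    ι ≫ biprod.lift β γ = (ι ≫ γ) ≫ biprod.inr := by
  ext <;> simp [w₁]

lemma comp_comp_inr_comp_eq_zero (w₁ : ι ≫ β = 0) (w₂ : biprod.lift β γ ≫ δ = 0) :
    (ι ≫ γ) ≫ biprod.inr ≫ δ = 0 := by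
  rw [← Category.assoc, ← comp_biprod_lift_eq w₁, Category.assoc, w₂, comp_zero]

theorem shortExact_comp_inr_comp {w₁ : ι ≫ β = 0} {w₂ : biprod.lift β γ ≫ δ = 0}
    (hse₁ : (ShortComplex.mk ι β w₁).ShortExact)
    (hse₂ : (ShortComplex.mk (biprod.lift β γ) δ w₂).ShortExact) :
    (ShortComplex.mk (ι ≫ γ) (biprod.inr ≫ δ)
      (comp_comp_inr_comp_eq_zero w₁ w₂)).ShortExact := by
  have := hse₁.mono_f; have := hse₁.epi_g; have := hse₂.mono_f; have := hse₂.epi_g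
  dsimp at *
  have hmono : Mono (ι ≫ γ) := by
    have : Mono ((ι ≫ γ) ≫ (biprod.inr : H ⟶ B ⊞ H)) := by
      rw [← comp_biprod_lift_eq w₁]; infer_instance
    exact mono_of_mono _ (biprod.inr : H ⟶ B ⊞ H)
  have hepi : Epi (biprod.inr ≫ δ) := by
    refine Preadditive.epi_of_cancel_zero _ fun {Q} π hπ => ?_
    have hinl : biprod.inl ≫ δ ≫ π = 0 := by
      apply zero_of_epi_comp β
      have := congrArg (· ≫ π) w₂
      simp only [biprod.lift_eq, Preadditive.add_comp, Category.assoc, zero_comp] at this ⊢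
      rwa [← Category.assoc biprod.inr, hπ, comp_zero, add_zero] at this
    exact zero_of_epi_comp δ (biprod.hom_ext' _ _ (by simpa using hinl) (by simpa using hπ))
  refine ⟨ShortComplex.exact_iff_exact_up_to_refinements _ |>.2 fun T x hx => ?_⟩
  dsimp at x hx
  obtain ⟨a, ha⟩ : ∃ a, a ≫ biprod.lift β γ = x ≫ biprod.inr :=
    ⟨hse₂.exact.lift (x ≫ biprod.inr) (by simpa using hx), hse₂.exact.lift_f _ _⟩
  have haβ : a ≫ β = 0 := by simpa using congrArg (· ≫ biprod.fst) ha
  refine ⟨T, 𝟙 T, inferInstance, hse₁.exact.lift a haβ, ?_⟩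
  dsimp
  rw [← Category.assoc, hse₁.exact.lift_f, Category.id_comp]
  simpa using (congrArg (· ≫ biprod.snd) ha).symm

end ShortExact

namespace ChainComplex

variable (R : Type*) [Ring R] {𝒜 : Type*} [Category 𝒜] [Abelian 𝒜] [Linear R 𝒜]
  {α : Type*} [AddRightCancelSemigroup α] [One α] (X : ChainComplex 𝒜 α)

def linearYoneda : 𝒜 ⥤ CochainComplex (ModuleCat R) α where
  obj Y := X.linearYonedaObj R Y
  map f :=
    { f n := ModuleCat.ofHom (Linear.rightComp R (X.X n) f)
      comm' _ _ _ := by ext; exact (Category.assoc _ _ _).symm }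
  map_id _ := by ext; exact Category.comp_id _
  map_comp _ _ := by ext; exact (Category.assoc _ _ _).symm

instance : (X.linearYoneda R).Additive where
  map_add := by intros; ext; exact Preadditive.comp_add _ _ _ _ _ _

instance {Y Z : 𝒜} (f : Y ⟶ Z) [Mono f] (n : α) : Mono (((X.linearYoneda R).map f).f n) :=
  (ModuleCat.mono_iff_injective _).2 fun _ _ h => (cancel_mono f).1 h

lemma shortExact_map_linearYoneda [∀ n, Projective (X.X n)] {S : ShortComplex 𝒜}
    (hS : S.ShortExact) : (S.map (X.linearYoneda R)).ShortExact := by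
  have := hS.mono_f
  have := hS.epi_g
  refine HomologicalComplex.shortExact_of_degreewise_shortExact _ fun n =>
    { exact := ?_, mono_f := ?_, epi_g := ?_ }
  · exact (ShortComplex.moduleCat_exact_iff _).2 fun x hx =>
      ⟨hS.exact.lift x hx, hS.exact.lift_f x hx⟩
  · exact inferInstanceAs (Mono (((X.linearYoneda R).map S.f).f n))
  · exact (ModuleCat.epi_iff_surjective _).2 fun g =>
      ⟨Projective.factorThru g S.g, Projective.factorThru_comp g S.g⟩

end ChainComplex

namespace HomologicalComplex

variable {𝕜 : Type*} [Field 𝕜] {ι : Type*} {c : ComplexShape ι}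

lemma finrank_homology_le_of_mono_comp_f {K Y L : HomologicalComplex (ModuleCat 𝕜) c}
    (φ : K ⟶ Y) (ψ : Y ⟶ L) (j : ι) [Mono ((φ ≫ ψ).f j)] (hj : ∀ i, ¬ c.Rel i j)
    [FiniteDimensional 𝕜 (Y.homology j)] :
    Module.finrank 𝕜 (K.homology j) ≤ Module.finrank 𝕜 (Y.homology j) := by
  have := mono_homologyMap_of_mono_of_not_rel (φ ≫ ψ) j hj
  rw [homologyMap_comp] at this
  have : Mono (homologyMap φ j) := mono_of_mono _ (homologyMap ψ j)
  exact LinearMap.finrank_le_finrank_of_injective ((ModuleCat.mono_iff_injective _).1 this)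

lemma finrank_homology_le_of_shortExact {T : ShortComplex (HomologicalComplex (ModuleCat 𝕜) c)}
    (hT : T.ShortExact) {Y : HomologicalComplex (ModuleCat 𝕜) c} (φ : T.X₁ ⟶ Y) (ψ : Y ⟶ T.X₂)
    (hφψ : φ ≫ ψ = T.f) {i j : ι} (hij : c.Rel i j)
    [FiniteDimensional 𝕜 (Y.homology j)] [FiniteDimensional 𝕜 (T.X₃.homology i)] :
    Module.finrank 𝕜 (T.X₁.homology j) ≤
      Module.finrank 𝕜 (Y.homology j) + Module.finrank 𝕜 (T.X₃.homology i) := by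
  have hex := (ShortComplex.moduleCat_exact_iff_ker_sub_range _).1 (hT.homology_exact₁ i j hij)
  rw [add_comm]
  refine Module.finrank_le_finrank_add_finrank_of_ker_le_range (hT.δ i j hij).hom
    (homologyMap φ j).hom fun x hx => hex ?_
  simp only [← hφψ, homologyMap_comp, ModuleCat.hom_comp]
  exact LinearMap.ker_le_ker_comp _ _ hx

end HomologicalComplex

section Ext

variable {𝕜 : Type*} [Field 𝕜] {𝒜 : Type*} [Category 𝒜] [Abelian 𝒜] [Linear 𝕜 𝒜]
  [EnoughProjectives 𝒜] (F : 𝒜) {K A H : 𝒜}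

theorem finrank_ext_zero_le_of_mono_comp (ι : K ⟶ A) (γ : A ⟶ H) [Mono (ι ≫ γ)]
    [FiniteDimensional 𝕜 (((Ext 𝕜 𝒜 0).obj (op F)).obj A)] :
    Module.finrank 𝕜 (((Ext 𝕜 𝒜 0).obj (op F)).obj K) ≤
      Module.finrank 𝕜 (((Ext 𝕜 𝒜 0).obj (op F)).obj A) := by
  let P := ProjectiveResolution.of F
  let G := P.complex.linearYoneda 𝕜
  have : FiniteDimensional 𝕜 ((G.obj A).homology 0) :=
    (P.isoExt 0 A).toLinearEquiv.finiteDimensional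
  have : Mono ((G.map ι ≫ G.map γ).f 0) := by rw [← G.map_comp]; infer_instance
  rw [(P.isoExt 0 K).toLinearEquiv.finrank_eq, (P.isoExt 0 A).toLinearEquiv.finrank_eq]
  exact HomologicalComplex.finrank_homology_le_of_mono_comp_f (G.map ι) (G.map γ) 0 (by simp)

theorem finrank_ext_succ_le_of_shortExact {C : 𝒜} {ι : K ⟶ A} {γ : A ⟶ H} {g : H ⟶ C}
    {w : (ι ≫ γ) ≫ g = 0} (hS : (ShortComplex.mk (ι ≫ γ) g w).ShortExact) (n : ℕ)
    [FiniteDimensional 𝕜 (((Ext 𝕜 𝒜 (n + 1)).obj (op F)).obj A)]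
    [FiniteDimensional 𝕜 (((Ext 𝕜 𝒜 n).obj (op F)).obj C)] :
    Module.finrank 𝕜 (((Ext 𝕜 𝒜 (n + 1)).obj (op F)).obj K) ≤
      Module.finrank 𝕜 (((Ext 𝕜 𝒜 (n + 1)).obj (op F)).obj A) +
        Module.finrank 𝕜 (((Ext 𝕜 𝒜 n).obj (op F)).obj C) := by
  let P := ProjectiveResolution.of F
  let G := P.complex.linearYoneda 𝕜
  let T := (ShortComplex.mk (ι ≫ γ) g w).map G
  have : FiniteDimensional 𝕜 ((G.obj A).homology (n + 1)) :=
    (P.isoExt (n + 1) A).toLinearEquiv.finiteDimensional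
  -- phrased through `T.X₃`, not `G.obj C`, so that instance search finds it below
  have : FiniteDimensional 𝕜 (T.X₃.homology n) := (P.isoExt n C).toLinearEquiv.finiteDimensional
  rw [(P.isoExt _ K).toLinearEquiv.finrank_eq, (P.isoExt _ A).toLinearEquiv.finrank_eq,
    (P.isoExt _ C).toLinearEquiv.finrank_eq]
  exact HomologicalComplex.finrank_homology_le_of_shortExact
    (P.complex.shortExact_map_linearYoneda 𝕜 hS) (G.map ι) (G.map γ) (G.map_comp ι γ).symm
    (by simp : (ComplexShape.up ℕ).Rel n (n + 1))

end Ext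

/-- If `0 → K → A →^β B → 0` is short exact and there are an object `H`
and a morphism `γ : A ⟶ H` such that `0 → A →^{(β,γ)} B ⊞ H → C → 0` is short exact
(the `B`-component of the first map being `β`), then `cc(F, K) ≤ cc(F, A) + cc(F, C)`. -/
theorem cc_of_virtual_zero_extension (𝕜 : Type*) [Field 𝕜] {𝒜 : Type*} [Category 𝒜]
    [Abelian 𝒜] [Linear 𝕜 𝒜] [EnoughProjectives 𝒜] (F K A B C H : 𝒜)
    (ι : K ⟶ A) (β : A ⟶ B) (w₁ : ι ≫ β = 0)
    (hse₁ : (ShortComplex.mk ι β w₁).ShortExact)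
    (γ : A ⟶ H) (δ : B ⊞ H ⟶ C) (w₂ : biprod.lift β γ ≫ δ = 0)
    (hse₂ : (ShortComplex.mk (biprod.lift β γ) δ w₂).ShortExact)
    (hfd : ∀ (i : ℕ) (X : 𝒜), FiniteDimensional 𝕜 (((Ext 𝕜 𝒜 i).obj (op F)).obj X))
    (hvan : ∀ X : 𝒜, ∃ N : ℕ, ∀ i ≥ N, Subsingleton (((Ext 𝕜 𝒜 i).obj (op F)).obj X)) :
    cc 𝕜 F K ≤ cc 𝕜 F A + cc 𝕜 F C := by
  have hS := shortExact_comp_inr_comp hse₁ hse₂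
  have := hS.mono_f
  exact finsum_le_finsum_add_finsum_of_le_add_pred
    (Module.finite_support_finrank_of_eventually_subsingleton (hvan A))
    (Module.finite_support_finrank_of_eventually_subsingleton (hvan C))
    (finrank_ext_zero_le_of_mono_comp F ι γ) fun n => finrank_ext_succ_le_of_shortExact F hS n
end

section
/- Suppose 0 → K → A →^β B → 0 is a short exact sequence in 𝒜; suppose there exist an object H and a morphism γ : A → H such that 0 → A →^{(β,γ)} B ⊕ H → C → 0 is exact, where the B-component of the first map is β; and suppose 0 → C' → G → C → 0 is a short exact sequence. Then cc(F, K) ≤ cc(F, G) + cc(F, A) + cc(F, C'). (This is the abstract form of the paper's Theorem 1: there K = G_{U∩Z̄}, A = G_U, B = G_{U∩Z}, C = G_Z, C' = G_{Z̄}, and H is a virtual G_{U,Z}.) -/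
open CategoryTheory Opposite Limits

/-!
Write `Eⁱ(X)` for `Ext^i(F, X)`. In positive degrees the long exact sequence of
`0 → K → A → B → 0` gives `dim E^{j+1}(K) ≤ dim coker(E^j(A) → E^j(B)) + dim E^{j+1}(A)`.
Since `β` is the first component of `(β, γ)` and the projection `E^j(B ⊞ H) → E^j(B)` is onto,
that cokernel is a quotient of `coker(E^j(A) → E^j(B ⊞ H))`, which embeds into `E^j(C)` by
exactness of the second sequence. The third sequence bounds
`dim E^j(C) ≤ dim E^j(G) + dim E^{j+1}(C')`. In degree `0`, `E⁰(K) → E⁰(A)` is injective.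
Summing over all degrees gives the inequality.
-/

open Module

section LinearAlgebra

variable {𝕜 U V W : Type*} [Field 𝕜] [AddCommGroup U] [Module 𝕜 U]
  [AddCommGroup V] [Module 𝕜 V] [AddCommGroup W] [Module 𝕜 W]

lemma finrank_le_finrank_range_add_of_range_eq_ker [FiniteDimensional 𝕜 V]
    [FiniteDimensional 𝕜 W] {f : U →ₗ[𝕜] V} {g : V →ₗ[𝕜] W}
    (hfg : LinearMap.range f = LinearMap.ker g) :
    finrank 𝕜 V ≤ finrank 𝕜 (LinearMap.range f) + finrank 𝕜 W := by
  rw [← g.finrank_range_add_finrank_ker, hfg, add_comm]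
  exact Nat.add_le_add_left (Submodule.finrank_le _) _

lemma finrank_quotient_range_eq_of_range_eq_ker {f : U →ₗ[𝕜] V} {g : V →ₗ[𝕜] W}
    (hfg : LinearMap.range f = LinearMap.ker g) :
    finrank 𝕜 (V ⧸ LinearMap.range f) = finrank 𝕜 (LinearMap.range g) :=
  ((Submodule.quotEquivOfEq _ _ hfg).trans g.quotKerEquivRange).finrank_eq

lemma finrank_quotient_range_comp_le [FiniteDimensional 𝕜 V] (f : U →ₗ[𝕜] V)
    {p : V →ₗ[𝕜] W} (hp : Function.Surjective p) :
    finrank 𝕜 (W ⧸ LinearMap.range (p ∘ₗ f)) ≤ finrank 𝕜 (V ⧸ LinearMap.range f) := by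
  refine LinearMap.finrank_le_finrank_of_surjective (f := Submodule.mapQ _ _ p
    (by rw [LinearMap.range_comp]; exact Submodule.le_comap_map _ _)) fun x => ?_
  obtain ⟨w, rfl⟩ := Submodule.mkQ_surjective _ x
  obtain ⟨v, rfl⟩ := hp w
  exact ⟨Submodule.Quotient.mk v, rfl⟩

end LinearAlgebra

namespace CategoryTheory.ShortComplex.ShortExact

variable {𝕜 ι : Type*} [Field 𝕜] {c : ComplexShape ι}
  {S : ShortComplex (HomologicalComplex (ModuleCat 𝕜) c)}

lemma finrank_homology_X₁_le (hS : S.ShortExact) {i j : ι} (hij : c.Rel i j)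
    [FiniteDimensional 𝕜 (S.X₁.homology j)] [FiniteDimensional 𝕜 (S.X₂.homology j)] :
    finrank 𝕜 (S.X₁.homology j) ≤
      finrank 𝕜 (S.X₃.homology i ⧸ LinearMap.range (HomologicalComplex.homologyMap S.g i).hom) +
        finrank 𝕜 (S.X₂.homology j) := by
  rw [finrank_quotient_range_eq_of_range_eq_ker
    (hS.homology_exact₃ i j hij).moduleCat_range_eq_ker]
  exact finrank_le_finrank_range_add_of_range_eq_ker
    (hS.homology_exact₁ i j hij).moduleCat_range_eq_ker

lemma finrank_quotient_range_homologyMap_f_le (hS : S.ShortExact) (i : ι)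
    [FiniteDimensional 𝕜 (S.X₃.homology i)] :
    finrank 𝕜 (S.X₂.homology i ⧸ LinearMap.range (HomologicalComplex.homologyMap S.f i).hom) ≤
      finrank 𝕜 (S.X₃.homology i) := by
  rw [finrank_quotient_range_eq_of_range_eq_ker (hS.homology_exact₂ i).moduleCat_range_eq_ker]
  exact Submodule.finrank_le _

lemma finrank_homology_X₃_le (hS : S.ShortExact) {i j : ι} (hij : c.Rel i j)
    [FiniteDimensional 𝕜 (S.X₂.homology i)] [FiniteDimensional 𝕜 (S.X₃.homology i)]
    [FiniteDimensional 𝕜 (S.X₁.homology j)] :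
    finrank 𝕜 (S.X₃.homology i) ≤ finrank 𝕜 (S.X₂.homology i) + finrank 𝕜 (S.X₁.homology j) :=
  (finrank_le_finrank_range_add_of_range_eq_ker
    (hS.homology_exact₃ i j hij).moduleCat_range_eq_ker).trans
      (Nat.add_le_add_right (LinearMap.finrank_range_le _) _)

end CategoryTheory.ShortComplex.ShortExact

section HomologyFunctor

variable {𝕜 I : Type*} [Field 𝕜] {c : ComplexShape I} {𝒜 : Type*} [Category 𝒜] [Abelian 𝒜]
  (L : 𝒜 ⥤ HomologicalComplex (ModuleCat 𝕜) c) [L.PreservesZeroMorphisms]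
  [∀ X i, FiniteDimensional 𝕜 ((L.obj X).homology i)]

lemma finrank_homology_le_of_shortExact
    (hL : ∀ S : ShortComplex 𝒜, S.ShortExact → (S.map L).ShortExact) {K A B C C' G H : 𝒜}
    {ι : K ⟶ A} {β : A ⟶ B} {w₁ : ι ≫ β = 0} (hse₁ : (ShortComplex.mk ι β w₁).ShortExact)
    {γ : A ⟶ H} {δ : B ⊞ H ⟶ C} {w₂ : biprod.lift β γ ≫ δ = 0}
    (hse₂ : (ShortComplex.mk (biprod.lift β γ) δ w₂).ShortExact)
    {ι' : C' ⟶ G} {π : G ⟶ C} {w₃ : ι' ≫ π = 0} (hse₃ : (ShortComplex.mk ι' π w₃).ShortExact)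
    {i j : I} (hij : c.Rel i j) :
    finrank 𝕜 ((L.obj K).homology j) ≤
      finrank 𝕜 ((L.obj A).homology j) + finrank 𝕜 ((L.obj G).homology i) +
        finrank 𝕜 ((L.obj C').homology j) := by
  have h₁ := hL _ hse₁
  have h₂ := hL _ hse₂
  have h₃ := hL _ hse₃
  -- unfold `S.map L`, so that the finiteness instances on `(L.obj X).homology i` apply
  dsimp only [ShortComplex.map] at h₁ h₂ h₃
  have hK := h₁.finrank_homology_X₁_le hij
  have hBH := h₂.finrank_quotient_range_homologyMap_f_le i
  have hC := h₃.finrank_homology_X₃_le hij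
  dsimp only at hK hBH hC
  have hfst : Function.Surjective (HomologicalComplex.homologyMap (L.map biprod.fst) i :
      (L.obj (B ⊞ H)).homology i ⟶ (L.obj B).homology i) := by
    rw [← ModuleCat.epi_iff_surjective]
    exact inferInstanceAs (Epi ((L ⋙ HomologicalComplex.homologyFunctor _ _ i).map biprod.fst))
  have hB := finrank_quotient_range_comp_le
    (HomologicalComplex.homologyMap (L.map (biprod.lift β γ)) i).hom hfst
  rw [← ModuleCat.hom_comp, ← HomologicalComplex.homologyMap_comp, ← L.map_comp,
    biprod.lift_fst] at hB
  omega

end HomologyFunctor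

section HomComplex

variable (𝕜 : Type*) [Ring 𝕜] {𝒜 : Type*} [Category 𝒜] [Abelian 𝒜] [Linear 𝕜 𝒜]
  {α : Type*} [AddRightCancelSemigroup α] [One α]

noncomputable def ChainComplex.linearYonedaFunctor (P : ChainComplex 𝒜 α) :
    𝒜 ⥤ CochainComplex (ModuleCat 𝕜) α where
  obj X := P.linearYonedaObj 𝕜 X
  map f :=
    { f n := ModuleCat.ofHom (Linear.rightComp 𝕜 (P.X n) f)
      comm' i j _ := by
        ext
        exact (Category.assoc _ _ _).symm }
  map_id X := by
    ext n
    exact Category.comp_id _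
  map_comp f g := by
    ext n
    exact (Category.assoc _ _ _).symm

instance (P : ChainComplex 𝒜 α) : (P.linearYonedaFunctor 𝕜).Additive where
  map_add := by
    intros
    ext
    exact Preadditive.comp_add _ _ _ _ _ _

instance ChainComplex.mono_linearYonedaFunctor_map_f (P : ChainComplex 𝒜 α) {X Y : 𝒜}
    (f : X ⟶ Y) [Mono f] (n : α) : Mono (((P.linearYonedaFunctor 𝕜).map f).f n) := by
  rw [ModuleCat.mono_iff_injective]
  intro (h₁ : P.X n ⟶ X) (h₂ : P.X n ⟶ X) (e : h₁ ≫ f = h₂ ≫ f)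
  exact (cancel_mono f).mp e

lemma ChainComplex.shortExact_map_linearYonedaFunctor (P : ChainComplex 𝒜 α)
    [∀ n, Projective (P.X n)] {S : ShortComplex 𝒜} (hS : S.ShortExact) :
    (S.map (P.linearYonedaFunctor 𝕜)).ShortExact := by
  have := hS.mono_f
  have := hS.epi_g
  refine HomologicalComplex.shortExact_of_degreewise_shortExact _ fun n => ?_
  have : Mono ((S.map (P.linearYonedaFunctor 𝕜)).map (HomologicalComplex.eval _ _ n)).f :=
    inferInstanceAs (Mono (((P.linearYonedaFunctor 𝕜).map S.f).f n))
  have : Epi ((S.map (P.linearYonedaFunctor 𝕜)).map (HomologicalComplex.eval _ _ n)).g := by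
    rw [ModuleCat.epi_iff_surjective]
    intro (h : P.X n ⟶ S.X₃)
    exact ⟨Projective.factorThru h S.g, Projective.factorThru_comp _ _⟩
  refine ShortComplex.ShortExact.mk ?_
  rw [ShortComplex.moduleCat_exact_iff]
  intro (h : P.X n ⟶ S.X₂) (hh : h ≫ S.g = 0)
  exact ⟨_, (KernelFork.IsLimit.lift' hS.fIsKernel h hh).2⟩

end HomComplex

section Ext

variable {𝕜 : Type*} [Field 𝕜] {𝒜 : Type*} [Category 𝒜] [Abelian 𝒜] [Linear 𝕜 𝒜]
  [EnoughProjectives 𝒜]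

lemma CategoryTheory.ProjectiveResolution.finrank_Ext_eq {F : 𝒜} (P : ProjectiveResolution F)
    (i : ℕ) (X : 𝒜) :
    finrank 𝕜 (((Ext 𝕜 𝒜 i).obj (op F)).obj X) =
      finrank 𝕜 (((P.complex.linearYonedaFunctor 𝕜).obj X).homology i) :=
  (P.isoExt i X).toLinearEquiv.finrank_eq

lemma finrank_Ext_succ_le {F K A B C C' G H : 𝒜}
    {ι : K ⟶ A} {β : A ⟶ B} {w₁ : ι ≫ β = 0} (hse₁ : (ShortComplex.mk ι β w₁).ShortExact)
    {γ : A ⟶ H} {δ : B ⊞ H ⟶ C} {w₂ : biprod.lift β γ ≫ δ = 0}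
    (hse₂ : (ShortComplex.mk (biprod.lift β γ) δ w₂).ShortExact)
    {ι' : C' ⟶ G} {π : G ⟶ C} {w₃ : ι' ≫ π = 0} (hse₃ : (ShortComplex.mk ι' π w₃).ShortExact)
    (hfd : ∀ (i : ℕ) (X : 𝒜), FiniteDimensional 𝕜 (((Ext 𝕜 𝒜 i).obj (op F)).obj X)) (j : ℕ) :
    finrank 𝕜 (((Ext 𝕜 𝒜 (j + 1)).obj (op F)).obj K) ≤
      finrank 𝕜 (((Ext 𝕜 𝒜 (j + 1)).obj (op F)).obj A) +
        finrank 𝕜 (((Ext 𝕜 𝒜 j).obj (op F)).obj G) +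
          finrank 𝕜 (((Ext 𝕜 𝒜 (j + 1)).obj (op F)).obj C') := by
  obtain ⟨P⟩ := HasProjectiveResolution.out (Z := F)
  have (X : 𝒜) (i : ℕ) :
      FiniteDimensional 𝕜 (((P.complex.linearYonedaFunctor 𝕜).obj X).homology i) :=
    (P.isoExt i X).toLinearEquiv.finiteDimensional
  simp only [P.finrank_Ext_eq]
  exact finrank_homology_le_of_shortExact _
    (fun _ => P.complex.shortExact_map_linearYonedaFunctor 𝕜) hse₁ hse₂ hse₃ rfl

lemma finrank_Ext_zero_le_of_mono (F : 𝒜) {X Y : 𝒜} (f : X ⟶ Y) [Mono f]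
    [FiniteDimensional 𝕜 (((Ext 𝕜 𝒜 0).obj (op F)).obj Y)] :
    finrank 𝕜 (((Ext 𝕜 𝒜 0).obj (op F)).obj X) ≤ finrank 𝕜 (((Ext 𝕜 𝒜 0).obj (op F)).obj Y) := by
  obtain ⟨P⟩ := HasProjectiveResolution.out (Z := F)
  have : FiniteDimensional 𝕜 (((P.complex.linearYonedaFunctor 𝕜).obj Y).homology 0) :=
    (P.isoExt 0 Y).toLinearEquiv.finiteDimensional
  rw [P.finrank_Ext_eq, P.finrank_Ext_eq]
  have := HomologicalComplex.mono_homologyMap_of_mono_of_not_rel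
    ((P.complex.linearYonedaFunctor 𝕜).map f) 0 (by simp)
  exact LinearMap.finrank_le_finrank_of_injective ((ModuleCat.mono_iff_injective _).mp this)

lemma cc_eq_sum_range {F X : 𝒜} {N : ℕ}
    (hN : ∀ i ≥ N, Subsingleton (((Ext 𝕜 𝒜 i).obj (op F)).obj X)) :
    cc 𝕜 F X = ∑ i ∈ Finset.range N, finrank 𝕜 (((Ext 𝕜 𝒜 i).obj (op F)).obj X) := by
  refine finsum_eq_sum_of_support_subset _ fun i hi => ?_
  by_contra hiN
  have := hN i (by simpa using hiN)
  exact hi finrank_zero_of_subsingleton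

end Ext

lemma Finset.sum_range_le_of_succ_le {k a g c : ℕ → ℕ} (h₀ : k 0 ≤ a 0)
    (hsucc : ∀ j, k (j + 1) ≤ a (j + 1) + g j + c (j + 1)) (N : ℕ) :
    ∑ i ∈ range N, k i ≤ ∑ i ∈ range N, g i + ∑ i ∈ range N, a i + ∑ i ∈ range N, c i := by
  cases N with
  | zero => simp
  | succ N =>
    have hg : ∑ j ∈ range N, g j ≤ ∑ j ∈ range (N + 1), g j :=
      sum_le_sum_of_subset (range_subset_range.2 N.le_succ)
    have hk : ∑ j ∈ range N, k (j + 1) ≤ ∑ j ∈ range N, (a (j + 1) + g j + c (j + 1)) :=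
      sum_le_sum fun j _ => hsucc j
    simp only [sum_range_succ' k, sum_range_succ' a, sum_range_succ' c, sum_add_distrib] at hk ⊢
    omega

/-- the abstract form of the paper's Theorem 1. Suppose
`0 → K → A →^β B → 0` is short exact; there are an object `H` and a morphism `γ : A ⟶ H`
with `0 → A →^{(β,γ)} B ⊞ H → C → 0` short exact (the `B`-component of the first map
being `β`); and `0 → C' → G → C → 0` is short exact. Then
`cc(F, K) ≤ cc(F, G) + cc(F, A) + cc(F, C')`. -/
theorem cc_theorem_one (𝕜 : Type*) [Field 𝕜] {𝒜 : Type*} [Category 𝒜]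
    [Abelian 𝒜] [Linear 𝕜 𝒜] [EnoughProjectives 𝒜] (F K A B C C' G H : 𝒜)
    (ι : K ⟶ A) (β : A ⟶ B) (w₁ : ι ≫ β = 0)
    (hse₁ : (ShortComplex.mk ι β w₁).ShortExact)
    (γ : A ⟶ H) (δ : B ⊞ H ⟶ C) (w₂ : biprod.lift β γ ≫ δ = 0)
    (hse₂ : (ShortComplex.mk (biprod.lift β γ) δ w₂).ShortExact)
    (ι' : C' ⟶ G) (π : G ⟶ C) (w₃ : ι' ≫ π = 0)
    (hse₃ : (ShortComplex.mk ι' π w₃).ShortExact)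
    (hfd : ∀ (i : ℕ) (X : 𝒜), FiniteDimensional 𝕜 (((Ext 𝕜 𝒜 i).obj (op F)).obj X))
    (hvan : ∀ X : 𝒜, ∃ N : ℕ, ∀ i ≥ N, Subsingleton (((Ext 𝕜 𝒜 i).obj (op F)).obj X)) :
    cc 𝕜 F K ≤ cc 𝕜 F G + cc 𝕜 F A + cc 𝕜 F C' := by
  obtain ⟨N₁, hK⟩ := hvan K
  obtain ⟨N₂, hA⟩ := hvan A
  obtain ⟨N₃, hG⟩ := hvan G
  obtain ⟨N₄, hC'⟩ := hvan C'
  have := hse₁.mono_f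
  let N := N₁ + N₂ + N₃ + N₄
  rw [cc_eq_sum_range (N := N) fun i hi => hK i (by omega),
    cc_eq_sum_range (N := N) fun i hi => hA i (by omega),
    cc_eq_sum_range (N := N) fun i hi => hG i (by omega),
    cc_eq_sum_range (N := N) fun i hi => hC' i (by omega)]
  exact Finset.sum_range_le_of_succ_le (finrank_Ext_zero_le_of_mono F ι)
    (finrank_Ext_succ_le hse₁ hse₂ hse₃ hfd) N
end

section
/- Let S be a finite set, let M_S be the monotone S-cube, and fix a vertex P of M_S and a function A assigning a nonnegative real number to each path of M_S starting at P (there are only finitely many such paths, since along each arrow the number of true values strictly increases). Then the function h : 𝔹^S → ℝ defined by h(f) = ∑_{Q ∈ Z_f} ∑_{φ ∈ Hom_{Z_f}(P, Q)} A(φ) is a formal AND measure. -/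
/-- The monotone `S`-cube `M_S`: the quiver on `𝔹^S = S → Bool` with exactly one arrow
from `f` to `g` when `f ≤ g` and `f s ≠ g s` for exactly one `s ∈ S`. -/
instance monotoneCubeQuiver (S : Type*) : Quiver (S → Bool) :=
  ⟨fun f g => PLift (f ≤ g ∧ ∃! s : S, f s ≠ g s)⟩

/-- `MemHomZ Z p` says that all vertices of the path `p` except the last one lie
outside `Z`; i.e. `p ∈ Hom_Z(P, Q)` in the notation of the paper. -/
def MemHomZ {V : Type*} [Quiver V] (Z : Set V) : ∀ {a c : V}, Quiver.Path a c → Prop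
  | _, _, Quiver.Path.nil => True
  | _, _, Quiver.Path.cons (b := b) p _ => MemHomZ Z p ∧ b ∉ Z

/-- The paper's measure `h(f) = ∑_{Q ∈ Z_f} ∑_{φ ∈ Hom_{Z_f}(P, Q)} A(φ)`, where
`Z_f = 𝔹^S \ U_f = {g : ¬ g ≤ f}` (the sums are finite, as each arrow of `M_S`
strictly increases the number of `true` values). -/
noncomputable def pathMeasure {S : Type*} [Fintype S] (P : S → Bool)
    (A : ∀ Q : S → Bool, Quiver.Path P Q → ℝ) (f : S → Bool) : ℝ :=
  ∑ᶠ (Q : S → Bool) (_ : Q ∈ {g : S → Bool | ¬ g ≤ f}),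
    ∑ᶠ (φ : Quiver.Path P Q) (_ : MemHomZ {g : S → Bool | ¬ g ≤ f} φ), A Q φ

/-!
Since `Z_{f ∧ g} = Z_f ∪ Z_g`, every `Q ∈ Z_{f ∧ g}` lies in `Z_f` or in `Z_g`, and a path
avoiding `Z_{f ∧ g}` before its last vertex also avoids the smaller sets `Z_f` and `Z_g`.
As `A ≥ 0`, each summand of `h(f ∧ g)` is thus bounded by the corresponding summand of
`h(f)` or of `h(g)`. All sums are finite because the arrows of `M_S` strictly increase
vertices in the pointwise order.
-/

section Finsum

variable {α M : Type*} [AddCommMonoid M] [PartialOrder M] [IsOrderedAddMonoid M]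
  {f g : α → M} {s t : Set α}

theorem finsum_mem_union_le (hs : s.Finite) (ht : t.Finite) (hf : ∀ x ∈ s ∩ t, 0 ≤ f x) :
    ∑ᶠ x ∈ s ∪ t, f x ≤ ∑ᶠ x ∈ s, f x + ∑ᶠ x ∈ t, f x := by
  rw [← finsum_mem_union_inter hs ht]
  exact le_add_of_nonneg_right (finsum_nonneg fun x => finsum_nonneg (hf x))

theorem finsum_mem_le_finsum_mem (hs : s.Finite) (h : ∀ x ∈ s, f x ≤ g x) :
    ∑ᶠ x ∈ s, f x ≤ ∑ᶠ x ∈ s, g x := by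
  rw [finsum_mem_eq_finite_toFinset_sum _ hs, finsum_mem_eq_finite_toFinset_sum _ hs]
  exact Finset.sum_le_sum fun x hx => h x (hs.mem_toFinset.1 hx)

theorem finsum_mem_le_finsum_mem_of_subset (hst : s ⊆ t) (ht : t.Finite)
    (hf : ∀ x ∈ t, 0 ≤ f x) : ∑ᶠ x ∈ s, f x ≤ ∑ᶠ x ∈ t, f x := by
  rw [← finsum_mem_add_sdiff hst ht]
  exact le_add_of_nonneg_right (finsum_nonneg fun x => finsum_nonneg fun hx => hf x hx.1)

end Finsum

theorem Set.setOf_not_le_inf {α : Type*} [SemilatticeInf α] (a b : α) :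
    {x | ¬x ≤ a ⊓ b} = {x | ¬x ≤ a} ∪ {x | ¬x ≤ b} := by
  ext x
  simp only [Set.mem_ofPred_eq, Set.mem_union, le_inf_iff, not_and_or]

theorem Quiver.Path.finite_of_hom_lt {V : Type*} [Preorder V] [Quiver V] [Finite V]
    [∀ a b : V, Finite (a ⟶ b)] (hlt : ∀ {a b : V}, (a ⟶ b) → a < b) (a b : V) :
    Finite (Path a b) := by
  induction b using WellFoundedLT.induction with
  | _ b ih =>
  have := fun c : {c // c < b} => ih c c.2
  let lastHom : Path a b → Option (Σ c : {c // c < b}, Path a c × (c.1 ⟶ b))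
    | .nil => none
    | .cons p e => some ⟨⟨_, hlt e⟩, p, e⟩
  refine Finite.of_injective lastHom ?_
  rintro (_ | ⟨p, e⟩) (_ | ⟨q, e'⟩) h <;> simp only [lastHom, reduceCtorEq, Option.some.injEq,
    Sigma.mk.injEq, Subtype.mk.injEq] at h ⊢
  obtain ⟨rfl, h⟩ := h
  simp_all

section MonotoneCube

variable {S : Type*}

instance monotoneCube_finite_hom (f g : S → Bool) : Finite (f ⟶ g) :=
  inferInstanceAs (Finite (PLift _))

theorem monotoneCube_lt_of_hom {f g : S → Bool} (e : f ⟶ g) : f < g :=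
  have ⟨hle, s, hs, _⟩ := e.down
  lt_of_le_of_ne hle fun h => hs (congrFun h s)

instance monotoneCube_finite_path [Finite S] (f g : S → Bool) : Finite (Quiver.Path f g) :=
  Quiver.Path.finite_of_hom_lt monotoneCube_lt_of_hom f g

end MonotoneCube

section FirstEntry

variable {V M : Type*} [Quiver V] [AddCommMonoid M] [PartialOrder M] [IsOrderedAddMonoid M]

@[simp] theorem memHomZ_cons (Z : Set V) {a b c : V} (p : Quiver.Path a b) (e : b ⟶ c) :
    MemHomZ Z (p.cons e) ↔ MemHomZ Z p ∧ b ∉ Z := by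
  rw [MemHomZ]

theorem MemHomZ.anti {Z Z' : Set V} (hZ : Z' ⊆ Z) {a c : V} {p : Quiver.Path a c}
    (hp : MemHomZ Z p) : MemHomZ Z' p := by
  induction p with
  | nil => simp [MemHomZ]
  | cons p e ih =>
    rw [memHomZ_cons] at hp ⊢
    exact ⟨ih hp.1, fun hb => hp.2 (hZ hb)⟩

/-- `∑_{Q ∈ Z} ∑_{φ ∈ Hom_Z(P, Q)} A(φ)`: the weight of the paths from `P` stopped on first
entering `Z`, so that `h(f)` is the case `Z = Z_f`. -/
noncomputable def firstEntrySum (P : V) (A : ∀ Q : V, Quiver.Path P Q → M) (Z : Set V) : M :=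
  ∑ᶠ (Q : V) (_ : Q ∈ Z), ∑ᶠ (φ : Quiver.Path P Q) (_ : MemHomZ Z φ), A Q φ

variable {P : V} {A : ∀ Q : V, Quiver.Path P Q → M}

theorem firstEntrySum_nonneg (hA : ∀ Q φ, 0 ≤ A Q φ) (Z : Set V) : 0 ≤ firstEntrySum P A Z :=
  finsum_nonneg fun Q => finsum_nonneg fun _ => finsum_nonneg fun φ => finsum_nonneg fun _ =>
    hA Q φ

theorem firstEntrySum_union_le [Finite V] [∀ Q : V, Finite (Quiver.Path P Q)]
    (hA : ∀ Q φ, 0 ≤ A Q φ) (Z₁ Z₂ : Set V) :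
    firstEntrySum P A (Z₁ ∪ Z₂) ≤ firstEntrySum P A Z₁ + firstEntrySum P A Z₂ := by
  let inner (Z : Set V) (Q : V) : M := ∑ᶠ (φ : Quiver.Path P Q) (_ : MemHomZ Z φ), A Q φ
  have inner_anti {Z Z' : Set V} (hZ : Z ⊆ Z') (Q : V) : inner Z' Q ≤ inner Z Q :=
    finsum_mem_le_finsum_mem_of_subset (s := {φ | MemHomZ Z' φ}) (fun _ => MemHomZ.anti hZ)
      (Set.toFinite _) fun φ _ => hA Q φ
  calc firstEntrySum P A (Z₁ ∪ Z₂)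
      ≤ ∑ᶠ Q ∈ Z₁, inner (Z₁ ∪ Z₂) Q + ∑ᶠ Q ∈ Z₂, inner (Z₁ ∪ Z₂) Q :=
        finsum_mem_union_le (Set.toFinite _) (Set.toFinite _) fun Q _ =>
          finsum_nonneg fun φ => finsum_nonneg fun _ => hA Q φ
    _ ≤ firstEntrySum P A Z₁ + firstEntrySum P A Z₂ :=
        add_le_add (finsum_mem_le_finsum_mem (Set.toFinite _) fun Q _ =>
            inner_anti Set.subset_union_left Q)
          (finsum_mem_le_finsum_mem (Set.toFinite _) fun Q _ =>
            inner_anti Set.subset_union_right Q)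

end FirstEntry

theorem pathMeasure_eq_firstEntrySum {S : Type*} [Fintype S] (P : S → Bool)
    (A : ∀ Q : S → Bool, Quiver.Path P Q → ℝ) (f : S → Bool) :
    pathMeasure P A f = firstEntrySum P A {g | ¬g ≤ f} :=
  rfl

/-- For any vertex `P` of the monotone `S`-cube and any assignment `A` of
nonnegative reals to the paths of `M_S` starting at `P`, the function
`h(f) = ∑_{Q ∈ Z_f} ∑_{φ ∈ Hom_{Z_f}(P, Q)} A(φ)` is a formal AND measure. -/
theorem pathMeasure_is_formal_and_measure {S : Type*} [Fintype S] (P : S → Bool)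
    (A : ∀ Q : S → Bool, Quiver.Path P Q → ℝ)
    (hA : ∀ (Q : S → Bool) (φ : Quiver.Path P Q), 0 ≤ A Q φ) :
    (∀ f : S → Bool, 0 ≤ pathMeasure P A f) ∧
    (∀ f g : S → Bool, pathMeasure P A (f ⊓ g) ≤ pathMeasure P A f + pathMeasure P A g) := by
  refine ⟨fun f => firstEntrySum_nonneg hA _, fun f g => ?_⟩
  simp only [pathMeasure_eq_firstEntrySum, Set.setOf_not_le_inf]
  exact firstEntrySum_union_le hA _ _
end
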